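/- arXiv:1810.04057 — 4 statements merged into one kernel-verified Lean document; each statement's English description precedes it below -/
import Mathlib

section
/- For every N ≥ 1 and b' ∈ ℝ, the partition function of the non-interacting monomer-dimer model on the complete graph satisfies Z⁰_N(b') := Σ_{D ∈ 𝒟_N} N^{−|D|} e^{b'(N−2|D|)} = √(N/(2π)) ∫_ℝ (x + e^{b'})^N exp(−N x²/2) dx. -/
/-!
Expanding `(x + e^{b'})^N` binomially turns the right-hand side into
`∑ₖ C(N,k) e^{b'(N-k)} Mₖ`, where `Mₖ` is the `k`-th moment of the centred normal law of
variance `1/N`: odd moments vanish and `M_{2m} = (2m-1)‼ / N^m`, a Gamma-function integral.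
On the left, the configurations with `m` dimers number `C(N,2m) (2m-1)‼`: listing the dimers
in some order and orienting each of them gives an injection `Fin m ⊕ Fin m ↪ Fin N`, there are
`N!/(N-2m)!` of these, and each configuration arises from exactly `m! 2^m` of them.
-/

open MeasureTheory Real

/-- `D` is a monomer-dimer configuration on `Fin N`: a set of non-loop edges
(pairs of distinct vertices) that are pairwise disjoint, i.e. a partition into
pairs of a subset of the vertex set. -/
def IsMDConfig (N : ℕ) (D : Finset (Sym2 (Fin N))) : Prop :=
  (∀ e ∈ D, ¬ e.IsDiag) ∧
    ∀ e ∈ D, ∀ f ∈ D, e ≠ f → ∀ v : Fin N, v ∈ e → v ∉ f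

open Finset Function
open scoped Nat

lemma sum_range_two_mul_of_odd_eq_zero {M : Type*} [AddCommMonoid M] (f : ℕ → M)
    (hf : ∀ m, f (2 * m + 1) = 0) (n : ℕ) :
    ∑ k ∈ range (2 * n), f k = ∑ m ∈ range n, f (2 * m) := by
  induction n with
  | zero => simp
  | succ n ih => rw [mul_add_one, sum_range_succ, sum_range_succ, hf, add_zero, ih, sum_range_succ]

section Counting

variable {ι α β : Type*} [Fintype ι] [DecidableEq ι]

lemma card_injective_forall_mem [Fintype α] [DecidableEq α] (D : Finset α) :
    #{g : ι → α | Injective g ∧ ∀ i, g i ∈ D} = (#D).descFactorial (Fintype.card ι) := by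
  rw [← Fintype.card_subtype, ← Fintype.card_coe D, ← Fintype.card_embedding_eq]
  exact Fintype.card_congr
    { toFun g := ⟨fun i => ⟨g.1 i, g.2.2 i⟩, fun i j h => g.2.1 (congrArg Subtype.val h)⟩
      invFun g := ⟨fun i => g i, Subtype.val_injective.comp g.injective, fun i => (g i).2⟩
      left_inv _ := rfl
      right_inv _ := rfl }

lemma card_filter_comp_eq [Fintype α] [DecidableEq β] (f : α → β) (g : ι → β) :
    #{p : ι → α | f ∘ p = g} = ∏ i, #{x | f x = g i} := by
  simp_rw [← Fintype.card_subtype, funext_iff, comp_apply]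
  exact (Fintype.card_congr (Equiv.subtypePiEquivPi (p := fun i x => f x = g i))).trans
    Fintype.card_pi

lemma card_filter_mk_eq_of_not_isDiag [Fintype α] [DecidableEq α] {e : Sym2 α}
    (he : ¬ e.IsDiag) : #{z : α × α | s(z.1, z.2) = e} = 2 := by
  induction e using Sym2.inductionOn with
  | hf a b =>
    rw [Sym2.mk_isDiag_iff] at he
    have hfiber : ({z : α × α | s(z.1, z.2) = s(a, b)} : Finset _) = {(a, b), (b, a)} := by
      ext ⟨x, y⟩
      simp
    rw [hfiber, card_pair]
    simpa [eq_comm] using he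

end Counting

section OrderedDimers

variable {V : Type*} {m : ℕ}

def dimers (p : Fin m → V × V) (q : Fin m) : Sym2 V := s((p q).1, (p q).2)

def endpoints (p : Fin m → V × V) : Fin m ⊕ Fin m → V :=
  Sum.elim (fun q => (p q).1) (fun q => (p q).2)

lemma card_injective_endpoints [Fintype V] [DecidableEq V] :
    #{p : Fin m → V × V | Injective (endpoints p)} = (Fintype.card V).descFactorial (2 * m) := by
  let e : (Fin m → V × V) ≃ (Fin m ⊕ Fin m → V) :=
    (Equiv.arrowProdEquivProdArrow _ _ _).trans (Equiv.sumArrowEquivProdArrow _ _ _).symm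
  rw [← Fintype.card_subtype, Fintype.card_congr
      (e.subtypeEquiv (p := fun p => Injective (endpoints p)) (q := Injective) fun p => Iff.rfl),
    Fintype.card_congr (Equiv.subtypeInjectiveEquivEmbedding _ _), Fintype.card_embedding_eq,
    Fintype.card_sum, Fintype.card_fin, two_mul]

variable {N : ℕ}

lemma injective_endpoints_iff {p : Fin m → Fin N × Fin N} :
    Injective (endpoints p) ↔ Injective (dimers p) ∧ IsMDConfig N (univ.image (dimers p)) := by
  simp only [endpoints, Sum.elim_injective, IsMDConfig, mem_image, mem_univ, true_and,
    forall_exists_index, forall_apply_eq_imp_iff, dimers, Sym2.mk_isDiag_iff, Sym2.mem_iff]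
  constructor
  · rintro ⟨hfst, hsnd, hne⟩
    refine ⟨fun q q' h => ?_, fun q => hne q q, fun q q' hqq' v hv hv' => ?_⟩
    · rcases Sym2.eq_iff.1 h with ⟨h, -⟩ | ⟨h, -⟩
      exacts [hfst h, absurd h (hne q q')]
    · have : q ≠ q' := fun h => hqq' (h ▸ rfl)
      rcases hv with rfl | rfl <;> rcases hv' with h | h
      exacts [this (hfst h), hne q q' h, hne q' q h.symm, this (hsnd h)]
  · rintro ⟨hinj, hdiag, hdisj⟩
    have key : ∀ q q' v,
        (v = (p q).1 ∨ v = (p q).2) → (v = (p q').1 ∨ v = (p q').2) → q = q' :=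
      fun q q' v hv hv' => by_contra fun h => hdisj q q' (hinj.ne h) v hv hv'
    exact ⟨fun q q' h => key q q' _ (.inl rfl) (.inl h),
      fun q q' h => key q q' _ (.inr rfl) (.inr h),
      fun q q' h => hdiag q (by rw [h, key q q' _ (.inl rfl) (.inr h)])⟩

lemma card_filter_dimers_eq [Fintype V] [DecidableEq V] {g : Fin m → Sym2 V}
    (hg : ∀ q, ¬ (g q).IsDiag) : #{p | dimers p = g} = 2 ^ m := by
  rw [show (dimers : (Fin m → V × V) → _) = ((fun z : V × V => s(z.1, z.2)) ∘ ·) from rfl,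
    card_filter_comp_eq, prod_congr rfl fun q _ => card_filter_mk_eq_of_not_isDiag (hg q),
    prod_const, card_univ, Fintype.card_fin]

lemma card_filter_image_dimers_eq {D : Finset (Sym2 (Fin N))} (hD : IsMDConfig N D) (hm : #D = m) :
    #{p : Fin m → Fin N × Fin N | Injective (endpoints p) ∧ univ.image (dimers p) = D} =
      m ! * 2 ^ m := by
  have hlists : #{g : Fin m → Sym2 (Fin N) | Injective g ∧ ∀ q, g q ∈ D} = m ! := by
    -- `convert` bridges the two instances deciding `∀ q : Fin m, _`.
    convert card_injective_forall_mem (ι := Fin m) D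
    rw [hm, Fintype.card_fin, Nat.descFactorial_self]
  rw [card_eq_sum_card_fiberwise (f := dimers) (t := {g | Injective g ∧ ∀ q, g q ∈ D}),
    ← hlists, ← smul_eq_mul, ← sum_const]
  · refine sum_congr rfl fun g hg => ?_
    simp only [mem_filter, mem_univ, true_and] at hg
    rw [← card_filter_dimers_eq fun q => hD.1 _ (hg.2 q)]
    congr 1
    ext p
    simp only [mem_filter, mem_univ, true_and, and_iff_right_iff_imp]
    rintro rfl
    have himage : univ.image (dimers p) = D := by
      refine eq_of_subset_of_card_le (by simpa [subset_iff] using hg.2) ?_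
      rw [card_image_of_injective _ hg.1, hm, card_univ, Fintype.card_fin]
    exact ⟨injective_endpoints_iff.2 ⟨hg.1, himage ▸ hD⟩, himage⟩
  · rintro p hp
    simp only [coe_filter, mem_univ, true_and, Set.mem_ofPred_eq] at hp ⊢
    obtain ⟨hinj, rfl⟩ := hp
    exact ⟨(injective_endpoints_iff.1 hinj).1, fun q => mem_image_of_mem _ (mem_univ q)⟩

end OrderedDimers

open Classical in
lemma card_mdConfigs_mul (N m : ℕ) :
    #{D | IsMDConfig N D ∧ #D = m} * (m ! * 2 ^ m) = N.descFactorial (2 * m) := by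
  have hlists := card_injective_endpoints (V := Fin N) (m := m)
  rw [Fintype.card_fin] at hlists
  rw [← hlists, card_eq_sum_card_fiberwise (f := fun p => univ.image (dimers p))
    (t := {D | IsMDConfig N D ∧ #D = m}), ← smul_eq_mul, ← sum_const]
  · refine sum_congr rfl fun D hD => ?_
    rw [mem_filter] at hD
    rw [filter_filter, card_filter_image_dimers_eq hD.2.1 hD.2.2]
  · rintro p hp
    simp only [coe_filter, mem_univ, true_and, Set.mem_ofPred_eq] at hp ⊢
    obtain ⟨hinj, hconf⟩ := injective_endpoints_iff.1 hp
    rw [card_image_of_injective _ hinj, card_univ, Fintype.card_fin]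
    exact ⟨hconf, rfl⟩

open Classical in
lemma card_mdConfigs (N m : ℕ) :
    #{D | IsMDConfig N D ∧ #D = m} = N.choose (2 * m) * (2 * m - 1)‼ := by
  have hfact : (2 * m)! = m ! * 2 ^ m * (2 * m - 1)‼ := by
    rcases m with _ | k
    · rfl
    · show (2 * k + 1 + 1)! = (k + 1)! * 2 ^ (k + 1) * (2 * k + 1)‼
      rw [Nat.factorial_eq_mul_doubleFactorial, show 2 * k + 1 + 1 = 2 * (k + 1) by ring,
        Nat.doubleFactorial_two_mul]
      ring
  refine Nat.eq_of_mul_eq_mul_right (by positivity : 0 < m ! * 2 ^ m) ?_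
  rw [card_mdConfigs_mul, Nat.descFactorial_eq_factorial_mul_choose, hfact]
  ring

-- `D` itself witnesses that the count `C(N, 2 #D) (2 #D - 1)‼` is positive.
open Classical in
lemma IsMDConfig.two_mul_card_le {N : ℕ} {D : Finset (Sym2 (Fin N))} (hD : IsMDConfig N D) :
    2 * #D ≤ N := by
  have hpos : 0 < #{D' | IsMDConfig N D' ∧ #D' = #D} := card_pos.2 ⟨D, by simp [hD]⟩
  rw [card_mdConfigs] at hpos
  by_contra h
  rw [Nat.choose_eq_zero_of_lt (not_le.1 h), zero_mul] at hpos
  exact lt_irrefl 0 hpos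

noncomputable def gaussianMoment (b : ℝ) (k : ℕ) : ℝ :=
  √(b / (2 * π)) * ∫ x, x ^ k * exp (-(b * x ^ 2 / 2))

lemma gaussianMoment_two_mul_add_one (b : ℝ) (m : ℕ) : gaussianMoment b (2 * m + 1) = 0 := by
  have h := integral_neg_eq_self (fun x : ℝ => x ^ (2 * m + 1) * exp (-(b * x ^ 2 / 2))) volume
  simp only [Odd.neg_pow ⟨m, rfl⟩, neg_sq, neg_mul, integral_neg] at h
  rw [gaussianMoment, show ∫ x, x ^ (2 * m + 1) * exp (-(b * x ^ 2 / 2)) = 0 by linarith,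
    mul_zero]

lemma gaussianMoment_two_mul {b : ℝ} (hb : 0 < b) (m : ℕ) :
    gaussianMoment b (2 * m) = (2 * m - 1)‼ / b ^ m := by
  have habs : ∀ x : ℝ, x ^ (2 * m) * exp (-(b * x ^ 2 / 2)) =
      |x| ^ ((2 * m : ℕ) : ℝ) * exp (-(b / 2) * |x| ^ (2 : ℝ)) := by
    intro x
    rw [rpow_natCast, rpow_two, (even_two_mul m).pow_abs, sq_abs]
    ring_nf
  have hhalf : (((2 * m : ℕ) : ℝ) + 1) / 2 = m + 1 / 2 := by push_cast; ring
  have hpow : (b / 2) ^ (-(((2 * m : ℕ) : ℝ) + 1) / 2) = ((b / 2) ^ m * √(b / 2))⁻¹ := by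
    rw [neg_div, hhalf, rpow_neg (by positivity), rpow_add (by positivity), rpow_natCast,
      sqrt_eq_rpow]
  have hsqrt : √(b / (2 * π)) = √(b / 2) / √π := by
    rw [← sqrt_div (by positivity), div_div]
  simp_rw [gaussianMoment, habs]
  rw [integral_comp_abs (f := fun y => y ^ ((2 * m : ℕ) : ℝ) * exp (-(b / 2) * y ^ (2 : ℝ))),
    integral_rpow_mul_exp_neg_mul_rpow two_pos (neg_one_lt_zero.trans_le (Nat.cast_nonneg _))
      (half_pos hb), hhalf, Gamma_nat_add_half, hpow, hsqrt]
  have : 0 < √(b / 2) := sqrt_pos.2 (by positivity)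
  have : 0 < √π := sqrt_pos.2 pi_pos
  field_simp
  rw [← mul_pow, div_mul_cancel₀ _ two_ne_zero]

lemma integrable_pow_mul_gaussian {b : ℝ} (hb : 0 < b) (k : ℕ) :
    Integrable fun x : ℝ => x ^ k * exp (-(b * x ^ 2 / 2)) := by
  have h := integrable_rpow_mul_exp_neg_mul_sq (half_pos hb)
    (neg_one_lt_zero.trans_le (Nat.cast_nonneg k))
  simp_rw [rpow_natCast] at h
  convert h using 4
  ring

lemma sqrt_mul_integral_add_pow_mul_gaussian {b : ℝ} (hb : 0 < b) (c : ℝ) (n : ℕ) :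
    √(b / (2 * π)) * ∫ x, (x + c) ^ n * exp (-(b * x ^ 2 / 2)) =
      ∑ k ∈ range (n + 1), n.choose k * c ^ (n - k) * gaussianMoment b k := by
  have hexpand : ∀ x : ℝ, (x + c) ^ n * exp (-(b * x ^ 2 / 2)) =
      ∑ k ∈ range (n + 1), x ^ k * exp (-(b * x ^ 2 / 2)) * (n.choose k * c ^ (n - k)) := by
    intro x
    rw [add_pow, sum_mul]
    exact sum_congr rfl fun k _ => by ring
  simp_rw [hexpand]
  rw [integral_finsetSum _ fun k _ => (integrable_pow_mul_gaussian hb k).mul_const _, mul_sum]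
  refine sum_congr rfl fun k _ => ?_
  rw [integral_mul_const, gaussianMoment]
  ring

open Classical in
/-- Integral representation of the non-interacting monomer-dimer partition
function on the complete graph of size `N`. -/
theorem nonInteracting_partition_integral (N : ℕ) (hN : 1 ≤ N) (b' : ℝ) :
    (∑ D ∈ Finset.univ.filter (IsMDConfig N),
        ((N : ℝ) ^ D.card)⁻¹ * Real.exp (b' * (N - 2 * D.card))) =
      Real.sqrt (N / (2 * Real.pi)) *
        ∫ x : ℝ, (x + Real.exp b') ^ N * Real.exp (-(N * x ^ 2 / 2)) := by
  have hmaps : ∀ D ∈ univ.filter (IsMDConfig N), #D ∈ range (N + 1) := fun D hD =>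
    mem_range.2 (by have := (mem_filter.1 hD).2.two_mul_card_le; omega)
  have hvanish : ∀ k ∈ range (2 * (N + 1)), k ∉ range (N + 1) →
      (N.choose k * exp b' ^ (N - k) * gaussianMoment N k : ℝ) = 0 := fun k _ hk => by
    rw [Nat.choose_eq_zero_of_lt (by simpa using hk), Nat.cast_zero, zero_mul, zero_mul]
  rw [sqrt_mul_integral_add_pow_mul_gaussian (by exact_mod_cast hN),
    ← sum_fiberwise_of_maps_to hmaps, sum_subset (range_subset_range.2 (by omega)) hvanish,
    sum_range_two_mul_of_odd_eq_zero _ fun m => by rw [gaussianMoment_two_mul_add_one, mul_zero]]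
  refine sum_congr rfl fun m _ => ?_
  rw [sum_congr rfl fun D hD => by rw [(mem_filter.1 hD).2], sum_const, filter_filter,
    card_mdConfigs, gaussianMoment_two_mul (by exact_mod_cast hN), nsmul_eq_mul]
  rcases le_or_gt (2 * m) N with h | h
  · rw [← exp_nat_mul, Nat.cast_sub h]
    push_cast
    ring_nf
  · simp [Nat.choose_eq_zero_of_lt h]
end

section
/- Let a > 0 and b ∈ ℝ. If 0 < a ≤ (3 + 2√2)/2, then the self-consistent equation e^{ay+b} = y/√(1−y) has exactly one solution y ∈ (0,1). -/
/-!
Taking logarithms, the equation reads `F y = b` with `F y = log y - log (1 - y) / 2 - a y`.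
Its derivative is `(2 - y) / (2 y (1 - y)) - a`, and on `(0, 1)` the first term is at least
`(3 + 2√2) / 2`, with equality only at `y = 2 - √2`. So for `a` up to this critical value `F` is
strictly increasing on `(0, 1)`, and since it runs from `-∞` at `0` to `+∞` at `1` it takes
every value exactly once.
-/

open Real Set Filter Topology

noncomputable def selfConsistentFun (a y : ℝ) : ℝ := log y - log (1 - y) / 2 - a * y

theorem strictMonoOn_Ioo_of_hasDerivAt_pos_of_ne {f f' : ℝ → ℝ} {a b c : ℝ} (hc : c ∈ Ioo a b)
    (hf : ∀ x ∈ Ioo a b, HasDerivAt f (f' x) x) (hf' : ∀ x ∈ Ioo a b, x ≠ c → 0 < f' x) :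
    StrictMonoOn f (Ioo a b) := by
  have hcont : ContinuousOn f (Ioo a b) := fun x hx => (hf x hx).continuousAt.continuousWithinAt
  have left : StrictMonoOn f (Ioc a c) := by
    refine strictMonoOn_of_hasDerivWithinAt_pos (f' := f') (convex_Ioc a c)
      (hcont.mono (Ioc_subset_Ioo_right hc.2)) (fun x hx => ?_) (fun x hx => ?_) <;>
      rw [interior_Ioc] at hx
    · exact (hf x ⟨hx.1, hx.2.trans hc.2⟩).hasDerivWithinAt
    · exact hf' x ⟨hx.1, hx.2.trans hc.2⟩ hx.2.ne
  have right : StrictMonoOn f (Ico c b) := by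
    refine strictMonoOn_of_hasDerivWithinAt_pos (f' := f') (convex_Ico c b)
      (hcont.mono (Ico_subset_Ioo_left hc.1)) (fun x hx => ?_) (fun x hx => ?_) <;>
      rw [interior_Ico] at hx
    · exact (hf x ⟨hc.1.trans hx.1, hx.2⟩).hasDerivWithinAt
    · exact hf' x ⟨hc.1.trans hx.1, hx.2⟩ hx.1.ne'
  rw [← Ioc_union_Ico_eq_Ioo hc.1 hc.2]
  exact left.union right (isGreatest_Ioc hc.1) (isLeast_Ico hc.2)

theorem exp_eq_div_sqrt_iff {a b y : ℝ} (hy : y ∈ Ioo 0 1) :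
    exp (a * y + b) = y / √(1 - y) ↔ selfConsistentFun a y = b := by
  have hpos : 0 < y / √(1 - y) := div_pos hy.1 (sqrt_pos.2 (sub_pos.2 hy.2))
  rw [← exp_log hpos, exp_eq_exp, log_div hy.1.ne' (sqrt_pos.2 (sub_pos.2 hy.2)).ne',
    log_sqrt (sub_pos.2 hy.2).le, selfConsistentFun]
  constructor <;> intro h <;> linarith

theorem hasDerivAt_selfConsistentFun (a : ℝ) {y : ℝ} (hy : y ∈ Ioo 0 1) :
    HasDerivAt (selfConsistentFun a) ((2 - y) / (2 * y * (1 - y)) - a) y := by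
  have h1y : 1 - y ≠ 0 := (sub_pos.2 hy.2).ne'
  have hlog1 := (((hasDerivAt_id' y).const_sub 1).log h1y).div_const 2
  refine (((hasDerivAt_log hy.1.ne').sub hlog1).sub
    ((hasDerivAt_id' y).const_mul a)).congr_deriv ?_
  field_simp [hy.1.ne']
  ring

theorem two_sub_sub_mul_eq_mul_sq (y : ℝ) :
    2 - y - (3 + 2 * √2) * (y * (1 - y)) = (3 + 2 * √2) * (y - (2 - √2)) ^ 2 := by
  linear_combination (5 - 4 * y - 2 * √2) * sq_sqrt (show (0:ℝ) ≤ 2 by norm_num)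

theorem three_add_two_mul_sqrt_two_div_two_lt {y : ℝ} (hy : y ∈ Ioo 0 1) (hne : y ≠ 2 - √2) :
    (3 + 2 * √2) / 2 < (2 - y) / (2 * y * (1 - y)) := by
  have hy1 : 0 < 1 - y := sub_pos.2 hy.2
  have hsq : 0 < (3 + 2 * √2) * (y - (2 - √2)) ^ 2 :=
    mul_pos (by positivity) (sq_pos_of_ne_zero (sub_ne_zero.2 hne))
  rw [lt_div_iff₀ (mul_pos (mul_pos two_pos hy.1) hy1)]
  linarith [two_sub_sub_mul_eq_mul_sq y]

theorem strictMonoOn_selfConsistentFun {a : ℝ} (ha : a ≤ (3 + 2 * √2) / 2) :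
    StrictMonoOn (selfConsistentFun a) (Ioo 0 1) := by
  have hc : 2 - √2 ∈ Ioo (0 : ℝ) 1 := by
    constructor <;> nlinarith [sq_sqrt (show (0 : ℝ) ≤ 2 by norm_num), sqrt_nonneg 2]
  exact strictMonoOn_Ioo_of_hasDerivAt_pos_of_ne hc
    (fun y hy => hasDerivAt_selfConsistentFun a hy)
    fun y hy hne => by linarith [three_add_two_mul_sqrt_two_div_two_lt hy hne]

theorem tendsto_selfConsistentFun_nhdsGT_zero (a : ℝ) :
    Tendsto (selfConsistentFun a) (𝓝[>] 0) atBot := by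
  have hrest : Tendsto (fun y => -(log (1 - y) / 2) - a * y) (𝓝[>] 0) (𝓝 0) := by
    have : ContinuousAt (fun y => -(log (1 - y) / 2) - a * y) 0 := by
      fun_prop (disch := norm_num)
    simpa using this.tendsto.mono_left nhdsWithin_le_nhds
  refine (tendsto_log_nhdsGT_zero.atBot_add hrest).congr fun y => ?_
  rw [selfConsistentFun]
  ring

theorem tendsto_selfConsistentFun_nhdsLT_one (a : ℝ) :
    Tendsto (selfConsistentFun a) (𝓝[<] 1) atTop := by
  have hrest : Tendsto (fun y => log y - a * y) (𝓝[<] 1) (𝓝 (-a)) := by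
    have : ContinuousAt (fun y => log y - a * y) 1 := by
      fun_prop (disch := norm_num)
    simpa using this.tendsto.mono_left nhdsWithin_le_nhds
  have hsub : Tendsto (fun y : ℝ => 1 - y) (𝓝[<] 1) (𝓝[>] 0) := by
    refine tendsto_nhdsWithin_iff.2
      ⟨?_, eventually_nhdsWithin_of_forall fun y hy => mem_Ioi.2 (sub_pos.2 hy)⟩
    simpa using ((continuous_sub_left (1 : ℝ)).tendsto 1).mono_left nhdsWithin_le_nhds
  have hlog : Tendsto (fun y => -(log (1 - y) / 2)) (𝓝[<] 1) atTop :=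
    tendsto_neg_atBot_atTop.comp ((tendsto_log_nhdsGT_zero.comp hsub).atBot_div_const two_pos)
  refine (hrest.add_atTop hlog).congr fun y => ?_
  rw [selfConsistentFun]
  ring

theorem surjOn_selfConsistentFun (a : ℝ) : SurjOn (selfConsistentFun a) (Ioo 0 1) univ := by
  have hcont : ContinuousOn (selfConsistentFun a) (Ioo 0 1) := fun y hy =>
    (hasDerivAt_selfConsistentFun a hy).continuousAt.continuousWithinAt
  exact hcont.surjOn_of_tendsto (nonempty_Ioo.2 one_pos)
    ((tendsto_comp_coe_Ioo_atBot one_pos).2 (tendsto_selfConsistentFun_nhdsGT_zero a))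
    ((tendsto_comp_coe_Ioo_atTop one_pos).2 (tendsto_selfConsistentFun_nhdsLT_one a))

theorem selfconsistent_unique_solution_general (a b : ℝ)
    (hac : a ≤ (3 + 2 * Real.sqrt 2) / 2) :
    ∃! y : ℝ, y ∈ Set.Ioo (0 : ℝ) 1 ∧
      Real.exp (a * y + b) = y / Real.sqrt (1 - y) := by
  obtain ⟨y, hy, hyb⟩ := surjOn_selfConsistentFun a (mem_univ b)
  refine ⟨y, ⟨hy, (exp_eq_div_sqrt_iff hy).2 hyb⟩, fun z ⟨hz, hzb⟩ => ?_⟩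
  exact (strictMonoOn_selfConsistentFun hac).injOn hz hy
    (((exp_eq_div_sqrt_iff hz).1 hzb).trans hyb.symm)

/-- For `0 < a ≤ (3+2√2)/2` the self-consistent equation
`e^{ay+b} = y/√(1-y)` has exactly one solution `y ∈ (0,1)`. -/
theorem selfconsistent_unique_solution (a b : ℝ) (ha : 0 < a)
    (hac : a ≤ (3 + 2 * Real.sqrt 2) / 2) :
    ∃! y : ℝ, y ∈ Set.Ioo (0 : ℝ) 1 ∧
      Real.exp (a * y + b) = y / Real.sqrt (1 - y) :=
  selfconsistent_unique_solution_general a b hac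
end

section
/- Let a > (3 + 2√2)/2 and define y_± = (2a + 1 ± √(4a² − 12a + 1))/(4a). Then 0 < y₋ < y₊ < 1, and for any b ∈ ℝ the equation e^{ay+b} = y/√(1−y) has at most one solution in each of the three intervals (0, y₋), (y₋, y₊), (y₊, 1); in particular it has at most three solutions in (0,1). -/
/-!
Taking logarithms, `e^{ay+b} = y/√(1-y)` on `(0,1)` says `F y = 0` for
`F y = a y + b - log y + log (1 - y) / 2`, whose derivative is
`-(2a y² - (2a+1) y + 2) / (2y(1-y))`. For `a > (3+2√2)/2` the quadratic has the two roots
`y₋ < y₊` in `(0,1)`, so `F` is strictly decreasing, increasing, decreasing on the three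
intervals they cut out, and each monotone piece has at most one zero.
-/

open Real Set

theorem Set.InjOn.subsingleton_fiber {α β : Type*} {f : α → β} {s : Set α} (hf : InjOn f s)
    (c : β) : {x ∈ s | f x = c}.Subsingleton :=
  fun _ hx _ hy => hf hx.1 hy.1 (hx.2.trans hy.2.symm)

theorem Set.encard_fiber_le_three {α β : Type*} {f : α → β} {s A B C : Set α}
    (hs : s ⊆ A ∪ B ∪ C) (hA : InjOn f A) (hB : InjOn f B) (hC : InjOn f C) (c : β) :
    {x ∈ s | f x = c}.encard ≤ 3 := by
  have hsplit : {x ∈ s | f x = c} ⊆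
      {x ∈ A | f x = c} ∪ {x ∈ B | f x = c} ∪ {x ∈ C | f x = c} := fun x hx => by
    rcases hs hx.1 with (hxA | hxB) | hxC
    exacts [.inl (.inl ⟨hxA, hx.2⟩), .inl (.inr ⟨hxB, hx.2⟩), .inr ⟨hxC, hx.2⟩]
  calc {x ∈ s | f x = c}.encard
      ≤ {x ∈ A | f x = c}.encard + {x ∈ B | f x = c}.encard + {x ∈ C | f x = c}.encard :=
        (encard_mono hsplit).trans <|
          (encard_union_le _ _).trans (by gcongr; exact encard_union_le _ _)
    _ ≤ 1 + 1 + 1 := by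
        gcongr <;> exact encard_le_one_iff_subsingleton.2 (InjOn.subsingleton_fiber ‹_› c)
    _ = 3 := by norm_num

namespace MonomerDimer

noncomputable def selfConsistentLog (a b y : ℝ) : ℝ :=
  a * y + b - log y + log (1 - y) / 2

noncomputable def yMinus (a : ℝ) : ℝ := (2 * a + 1 - √(4 * a ^ 2 - 12 * a + 1)) / (4 * a)

noncomputable def yPlus (a : ℝ) : ℝ := (2 * a + 1 + √(4 * a ^ 2 - 12 * a + 1)) / (4 * a)

section Monotonicity

variable (a b : ℝ)

theorem exp_eq_div_sqrt_iff {y : ℝ} (hy : y ∈ Ioo (0 : ℝ) 1) :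
    exp (a * y + b) = y / √(1 - y) ↔ selfConsistentLog a b y = 0 := by
  have h1y : 0 < 1 - y := sub_pos.2 hy.2
  have hsqrt : 0 < √(1 - y) := sqrt_pos.2 h1y
  rw [← exp_log (div_pos hy.1 hsqrt), exp_eq_exp, log_div hy.1.ne' hsqrt.ne', log_sqrt h1y.le,
    selfConsistentLog]
  constructor <;> intro h <;> linarith

theorem setOf_exp_eq_div_sqrt {I : Set ℝ} (hI : I ⊆ Ioo 0 1) :
    {y ∈ I | exp (a * y + b) = y / √(1 - y)} = {y ∈ I | selfConsistentLog a b y = 0} := by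
  ext y
  simp only [mem_ofPred_eq]
  exact and_congr_right fun hy => exp_eq_div_sqrt_iff a b (hI hy)

theorem hasDerivAt_selfConsistentLog {y : ℝ} (hy : y ∈ Ioo (0 : ℝ) 1) :
    HasDerivAt (selfConsistentLog a b)
      (-(2 * a * y ^ 2 - (2 * a + 1) * y + 2) / (2 * y * (1 - y))) y := by
  have hy0 : y ≠ 0 := hy.1.ne'
  have h1y : 1 - y ≠ 0 := (sub_pos.2 hy.2).ne'
  have hlog1 : HasDerivAt (fun y => log (1 - y)) ((1 - y)⁻¹ * -1) y :=
    (hasDerivAt_log h1y).comp y ((hasDerivAt_id y).const_sub 1)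
  refine (((((hasDerivAt_id y).const_mul a).add_const b).sub (hasDerivAt_log hy0)).add
    (hlog1.div_const 2)).congr_deriv ?_
  field_simp
  ring

theorem strictAntiOn_selfConsistentLog {s : Set ℝ} (hs : Convex ℝ s) (hsub : s ⊆ Ioo 0 1)
    (hq : ∀ y ∈ interior s, 0 < 2 * a * y ^ 2 - (2 * a + 1) * y + 2) :
    StrictAntiOn (selfConsistentLog a b) s := by
  have hderiv y (hy : y ∈ s) := hasDerivAt_selfConsistentLog a b (hsub hy)
  refine strictAntiOn_of_deriv_neg hs
    (fun y hy => (hderiv y hy).continuousAt.continuousWithinAt) fun y hy => ?_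
  have hy' := hsub (interior_subset hy)
  rw [(hderiv y (interior_subset hy)).deriv]
  exact div_neg_of_neg_of_pos (neg_neg_of_pos (hq y hy))
    (mul_pos (mul_pos two_pos hy'.1) (sub_pos.2 hy'.2))

theorem strictMonoOn_selfConsistentLog {s : Set ℝ} (hs : Convex ℝ s) (hsub : s ⊆ Ioo 0 1)
    (hq : ∀ y ∈ interior s, 2 * a * y ^ 2 - (2 * a + 1) * y + 2 < 0) :
    StrictMonoOn (selfConsistentLog a b) s := by
  have hderiv y (hy : y ∈ s) := hasDerivAt_selfConsistentLog a b (hsub hy)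
  refine strictMonoOn_of_deriv_pos hs
    (fun y hy => (hderiv y hy).continuousAt.continuousWithinAt) fun y hy => ?_
  have hy' := hsub (interior_subset hy)
  rw [(hderiv y (interior_subset hy)).deriv]
  exact div_pos (neg_pos.2 (hq y hy)) (mul_pos (mul_pos two_pos hy'.1) (sub_pos.2 hy'.2))

end Monotonicity

section Roots

variable {a : ℝ} (ha : (3 + 2 * √2) / 2 < a)
include ha

theorem discrim_pos : 0 < 4 * a ^ 2 - 12 * a + 1 := by
  have h2 : √2 ^ 2 = 2 := sq_sqrt zero_le_two
  nlinarith [sqrt_nonneg 2]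

theorem zero_lt_yMinus_lt_yPlus_lt_one : 0 < yMinus a ∧ yMinus a < yPlus a ∧ yPlus a < 1 := by
  set s := √(4 * a ^ 2 - 12 * a + 1)
  have hD := discrim_pos ha
  have ha_gt : 3 / 2 < a := by linarith [sqrt_nonneg 2]
  have hs2 : s ^ 2 = 4 * a ^ 2 - 12 * a + 1 := sq_sqrt hD.le
  have hs0 : 0 < s := sqrt_pos.2 hD
  have h4a : 0 < 4 * a := by linarith
  have hs_lt : s < 2 * a - 1 := lt_of_pow_lt_pow_left₀ 2 (by linarith) (by nlinarith)
  refine ⟨div_pos (by nlinarith) h4a, div_lt_div_of_pos_right (by linarith) h4a,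
    (div_lt_one h4a).2 (by linarith)⟩

theorem quadratic_eq_mul_sub_yMinus_mul_sub_yPlus (y : ℝ) :
    2 * a * y ^ 2 - (2 * a + 1) * y + 2 = 2 * a * (y - yMinus a) * (y - yPlus a) := by
  have ha0 : a ≠ 0 := by linarith [sqrt_nonneg 2]
  have hs2 : √(4 * a ^ 2 - 12 * a + 1) ^ 2 = 4 * a ^ 2 - 12 * a + 1 := sq_sqrt (discrim_pos ha).le
  simp only [yMinus, yPlus]
  generalize √(4 * a ^ 2 - 12 * a + 1) = s at hs2 ⊢
  field_simp
  linear_combination 2 * hs2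

theorem strictAntiOn_Ioc_yMinus (b : ℝ) :
    StrictAntiOn (selfConsistentLog a b) (Ioc 0 (yMinus a)) := by
  obtain ⟨-, hmp, hp1⟩ := zero_lt_yMinus_lt_yPlus_lt_one ha
  refine strictAntiOn_selfConsistentLog a b (convex_Ioc _ _)
    (fun y hy => ⟨hy.1, by linarith [hy.2]⟩) fun y hy => ?_
  rw [interior_Ioc] at hy
  rw [quadratic_eq_mul_sub_yMinus_mul_sub_yPlus ha]
  exact mul_pos_of_neg_of_neg (mul_neg_of_pos_of_neg (by linarith [sqrt_nonneg 2])
    (by linarith [hy.2])) (by linarith [hy.2])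

theorem strictMonoOn_Icc_yMinus_yPlus (b : ℝ) :
    StrictMonoOn (selfConsistentLog a b) (Icc (yMinus a) (yPlus a)) := by
  obtain ⟨hm0, -, hp1⟩ := zero_lt_yMinus_lt_yPlus_lt_one ha
  refine strictMonoOn_selfConsistentLog a b (convex_Icc _ _)
    (fun y hy => ⟨by linarith [hy.1], by linarith [hy.2]⟩) fun y hy => ?_
  rw [interior_Icc] at hy
  rw [quadratic_eq_mul_sub_yMinus_mul_sub_yPlus ha]
  exact mul_neg_of_pos_of_neg (mul_pos (by linarith [sqrt_nonneg 2]) (by linarith [hy.1]))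
    (by linarith [hy.2])

theorem strictAntiOn_Ico_yPlus (b : ℝ) :
    StrictAntiOn (selfConsistentLog a b) (Ico (yPlus a) 1) := by
  obtain ⟨hm0, hmp, -⟩ := zero_lt_yMinus_lt_yPlus_lt_one ha
  refine strictAntiOn_selfConsistentLog a b (convex_Ico _ _)
    (fun y hy => ⟨by linarith [hy.1], hy.2⟩) fun y hy => ?_
  rw [interior_Ico] at hy
  rw [quadratic_eq_mul_sub_yMinus_mul_sub_yPlus ha]
  exact mul_pos (mul_pos (by linarith [sqrt_nonneg 2]) (by linarith [hy.1])) (by linarith [hy.1])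

end Roots

end MonomerDimer

/-- For `a > (3+2√2)/2`, with `y₋ < y₊` the roots of `4a y² - (4a+2) y + 2`,
the self-consistent equation `e^{ay+b} = y/√(1-y)` has at most one solution in
each of `(0,y₋)`, `(y₋,y₊)`, `(y₊,1)`, hence at most three solutions in `(0,1)`. -/
theorem selfconsistent_at_most_three (a : ℝ) (ha : (3 + 2 * Real.sqrt 2) / 2 < a) :
    let ym : ℝ := (2 * a + 1 - Real.sqrt (4 * a ^ 2 - 12 * a + 1)) / (4 * a)
    let yp : ℝ := (2 * a + 1 + Real.sqrt (4 * a ^ 2 - 12 * a + 1)) / (4 * a)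
    0 < ym ∧ ym < yp ∧ yp < 1 ∧
      ∀ b : ℝ,
        ({y ∈ Set.Ioo 0 ym | Real.exp (a * y + b) = y / Real.sqrt (1 - y)}).Subsingleton ∧
        ({y ∈ Set.Ioo ym yp | Real.exp (a * y + b) = y / Real.sqrt (1 - y)}).Subsingleton ∧
        ({y ∈ Set.Ioo yp 1 | Real.exp (a * y + b) = y / Real.sqrt (1 - y)}).Subsingleton ∧
        ({y ∈ Set.Ioo (0 : ℝ) 1 |
            Real.exp (a * y + b) = y / Real.sqrt (1 - y)}).encard ≤ 3 := by
  intro ym yp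
  rw [show ym = MonomerDimer.yMinus a from rfl, show yp = MonomerDimer.yPlus a from rfl]
  obtain ⟨hm0, hmp, hp1⟩ := MonomerDimer.zero_lt_yMinus_lt_yPlus_lt_one ha
  refine ⟨hm0, hmp, hp1, fun b => ?_⟩
  have hanti₁ := MonomerDimer.strictAntiOn_Ioc_yMinus ha b
  have hmono := MonomerDimer.strictMonoOn_Icc_yMinus_yPlus ha b
  have hanti₃ := MonomerDimer.strictAntiOn_Ico_yPlus ha b
  have hcover := Ioc_union_Ico_eq_Ioo (hm0.trans hmp) hp1
  rw [← Ioc_union_Icc_eq_Ioc hm0 hmp.le] at hcover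
  rw [MonomerDimer.setOf_exp_eq_div_sqrt a b (Ioo_subset_Ioo_right (hmp.trans hp1).le),
    MonomerDimer.setOf_exp_eq_div_sqrt a b (Ioo_subset_Ioo hm0.le hp1.le),
    MonomerDimer.setOf_exp_eq_div_sqrt a b (Ioo_subset_Ioo_left (hm0.trans hmp).le),
    MonomerDimer.setOf_exp_eq_div_sqrt a b subset_rfl]
  exact ⟨(hanti₁.injOn.mono Ioo_subset_Ioc_self).subsingleton_fiber 0,
    (hmono.injOn.mono Ioo_subset_Icc_self).subsingleton_fiber 0,
    (hanti₃.injOn.mono Ioo_subset_Ico_self).subsingleton_fiber 0,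
    encard_fiber_le_three hcover.ge hanti₁.injOn hmono.injOn hanti₃.injOn 0⟩
end

section
/- For all y ∈ (0,1) and a > 0, the quantity 2 − y − 2a y(1−y) attains value 0 only if a ≥ (3+2√2)/2; equivalently, if 0 < a < (3+2√2)/2 then 2 − y − 2a y(1−y) > 0 for all y ∈ (0,1). -/
/-!
Completing the square with `(1 + √2)² = 3 + 2√2` gives
`2 - y - 2a y(1-y) = ((1 + √2) y - √2)² + (3 + 2√2 - 2a) y(1-y)`,
and for `y ∈ (0,1)` the last term is positive as soon as `2a < 3 + 2√2`.
-/

open Real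

theorem two_sub_sub_eq_sq_add (a y : ℝ) :
    2 - y - 2 * a * y * (1 - y) =
      ((1 + √2) * y - √2) ^ 2 + (3 + 2 * √2 - 2 * a) * (y * (1 - y)) := by
  linear_combination (-(y - 1) ^ 2) * sq_sqrt (zero_le_two : (0 : ℝ) ≤ 2)

theorem two_sub_sub_pos {a y : ℝ} (ha : a < (3 + 2 * √2) / 2) (hy : y ∈ Set.Ioo (0 : ℝ) 1) :
    0 < 2 - y - 2 * a * y * (1 - y) := by
  have hy' : 0 < y * (1 - y) := mul_pos hy.1 (sub_pos.2 hy.2)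
  rw [two_sub_sub_eq_sq_add]
  have : 0 < 3 + 2 * √2 - 2 * a := by linarith
  positivity

/-- Subcritically (`0 < a < (3+2√2)/2`) the normalized Hessian determinant
`2 - y - 2ay(1-y)` is strictly positive on `(0,1)`; equivalently it can vanish
only if `a ≥ (3+2√2)/2`. -/
theorem det_positive_subcritical :
    (∀ a : ℝ, 0 < a → a < (3 + 2 * Real.sqrt 2) / 2 →
      ∀ y ∈ Set.Ioo (0 : ℝ) 1, 0 < 2 - y - 2 * a * y * (1 - y)) ∧
    (∀ a : ℝ, 0 < a → ∀ y ∈ Set.Ioo (0 : ℝ) 1,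
      2 - y - 2 * a * y * (1 - y) = 0 → (3 + 2 * Real.sqrt 2) / 2 ≤ a) := by
  refine ⟨fun a _ ha y hy => two_sub_sub_pos ha hy, fun a _ y hy hzero => ?_⟩
  by_contra! ha
  exact (two_sub_sub_pos ha hy).ne' hzero
end
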